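/- Let Δ have a primitive positive interpretation I = (d, S, h) in a finite or ω-categorical structure Γ, and let C be any polymorphism algebra of Γ. Then: S induces a subalgebra S of C^d; the kernel K = {(ā, b̄) ∈ S² : h(ā) = h(b̄)} of the coordinate map h is a congruence of S; and the quotient construction yields an algebra B on the domain of Δ (defined by f^B(c₁,…,c_m) := h(f^S(ā₁,…,ā_m)) for any preimages ā_i ∈ S with h(ā_i) = c_i) that is well defined, makes h a surjective homomorphism from S onto B, and satisfies that every basic operation of B is a polymorphism of Δ; in particular B ∈ HSP^fin(C). -/

import Mathlib

open FirstOrder FirstOrder.Language FirstOrder.Language.Structure Cardinal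

/-- Primitive positive formulas over the language `L`, with free variables indexed by `α`
and `n` additional (bound) variables: built from atomic formulas (equalities between terms
and relation symbols applied to terms) using only conjunction and existential quantification. -/
inductive PPFormula (L : FirstOrder.Language.{0, 0}) (α : Type) : ℕ → Type
  | equal {n : ℕ} (t₁ t₂ : L.Term (α ⊕ Fin n)) : PPFormula L α n
  | rel {n m : ℕ} (R : L.Relations m) (ts : Fin m → L.Term (α ⊕ Fin n)) : PPFormula L α n
  | and {n : ℕ} (φ ψ : PPFormula L α n) : PPFormula L α n
  | ex {n : ℕ} (φ : PPFormula L α (n + 1)) : PPFormula L α n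

/-- Realization (satisfaction) of a primitive positive formula in an `L`-structure `D`. -/
def PPFormula.Realize {L : FirstOrder.Language.{0, 0}} {D : Type} [L.Structure D] {α : Type} :
    ∀ {n : ℕ}, PPFormula L α n → (α → D) → (Fin n → D) → Prop
  | _, PPFormula.equal t₁ t₂, v, xs =>
      t₁.realize (Sum.elim v xs) = t₂.realize (Sum.elim v xs)
  | _, PPFormula.rel R ts, v, xs => RelMap R fun i => (ts i).realize (Sum.elim v xs)
  | _, PPFormula.and φ ψ, v, xs => PPFormula.Realize φ v xs ∧ PPFormula.Realize ψ v xs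
  | _, PPFormula.ex φ, v, xs => ∃ a : D, PPFormula.Realize φ v (Fin.snoc xs a)

/-- A relation `R` (on tuples indexed by `α`) is primitive positive definable in the
`L`-structure `D` iff some primitive positive formula defines it. -/
def PPDefinable (L : FirstOrder.Language.{0, 0}) (D : Type) [L.Structure D] {α : Type}
    (R : Set (α → D)) : Prop :=
  ∃ φ : PPFormula L α 0, ∀ v : α → D, v ∈ R ↔ φ.Realize v (fun i => i.elim0)

/-- `f : D^l → D` is a polymorphism of the `L`-structure `D`: a homomorphism from the
`l`-th power of the structure to the structure. -/
def IsPolymorphism (L : FirstOrder.Language.{0, 0}) (D : Type) [L.Structure D] {l : ℕ}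
    (f : (Fin l → D) → D) : Prop :=
  (∀ {n : ℕ} (F : L.Functions n) (a : Fin n → Fin l → D),
      f (fun i => funMap F fun j => a j i) = funMap F fun j => f (a j)) ∧
  (∀ {n : ℕ} (R : L.Relations n) (a : Fin n → Fin l → D),
      (∀ i, RelMap R fun j => a j i) → RelMap R fun j => f (a j))

/-- `f : D^l → D` preserves the relation `R ⊆ D^α`: applying `f` coordinatewise to `l`
tuples in `R` yields a tuple in `R`. -/
def Preserves {D : Type} {α : Type} {l : ℕ} (f : (Fin l → D) → D)
    (R : Set (α → D)) : Prop :=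
  ∀ t : Fin l → α → D, (∀ i, t i ∈ R) → (fun j => f fun i => t i j) ∈ R

/-- The `L`-structure `D` is ω-categorical: its first-order theory has, up to isomorphism,
exactly one countable model. -/
def IsOmegaCategorical (L : FirstOrder.Language.{0, 0}) (D : Type) [L.Structure D] : Prop :=
  (∃ M : Theory.ModelType.{0, 0, 0} (L.completeTheory D), #M = ℵ₀) ∧
  (∀ M N : Theory.ModelType.{0, 0, 0} (L.completeTheory D),
      #M = ℵ₀ → #N = ℵ₀ → Nonempty (M ≃[L] N))

/-- An algebra, given by operations `ops` indexed by `I` with arities `ar`, is a polymorphism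
algebra of the `L`-structure `D` iff its set of basic operations is precisely the set of
polymorphisms of `D`. -/
def IsPolymorphismAlgebra (L : FirstOrder.Language.{0, 0}) (D : Type) [L.Structure D]
    {I : Type} (ar : I → ℕ) (ops : ∀ i, (Fin (ar i) → D) → D) : Prop :=
  (Set.range fun i => (⟨ar i, ops i⟩ : Σ n : ℕ, (Fin n → D) → D)) =
    {p : Σ n : ℕ, (Fin n → D) → D | IsPolymorphism L D p.2}

/-- Membership in the clone of term operations of the algebra `ops`: the smallest set of
operations containing the projections and the basic operations and closed under composition. -/
inductive InClone {A : Type} {I : Type} {ar : I → ℕ}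
    (ops : ∀ i, (Fin (ar i) → A) → A) : ∀ n : ℕ, ((Fin n → A) → A) → Prop
  | proj {n : ℕ} (k : Fin n) : InClone ops n fun x => x k
  | comp (i : I) {n : ℕ} (g : Fin (ar i) → (Fin n → A) → A)
      (hg : ∀ j, InClone ops n (g j)) : InClone ops n fun x => ops i fun j => g j x

/-- `S ⊆ C^d` is (the domain of) a subalgebra of the `d`-th power of the algebra `ops`:
it is closed under all basic operations acting coordinatewise. -/
def ClosedUnderPow {C : Type} {I : Type} {ar : I → ℕ} (ops : ∀ i, (Fin (ar i) → C) → C)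
    {d : ℕ} (S : Set (Fin d → C)) : Prop :=
  ∀ (i : I) (a : Fin (ar i) → Fin d → C), (∀ k, a k ∈ S) →
    (fun j => ops i fun k => a k j) ∈ S

/-- The algebra `opsB` belongs to the pseudovariety `HSP^fin` generated by the algebra `opsC`:
it is a homomorphic image of a subalgebra of a finite power of `opsC`. -/
def InHSPfin {I : Type} {ar : I → ℕ} {C B : Type} (opsC : ∀ i, (Fin (ar i) → C) → C)
    (opsB : ∀ i, (Fin (ar i) → B) → B) : Prop :=
  ∃ (d : ℕ) (S : Set (Fin d → C)) (h : S → B),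
    ClosedUnderPow opsC S ∧ Function.Surjective h ∧
    ∀ (i : I) (a : Fin (ar i) → S) (hm : (fun j => opsC i fun k => (a k).val j) ∈ S),
      h ⟨_, hm⟩ = opsB i fun k => h (a k)

/-- `(d, S, h)` is a primitive positive interpretation of the `L'`-structure `E` in the
`L`-structure `D`: `h : S → E` is surjective, the domain `S ⊆ D^d` is primitive positive
definable in `D`, and each unnested atomic formula of `L'` (equality `x₀ = x₁`, relations
`R(x₁,…,x_m)`, and graphs of functions `x₀ = F(x₁,…,x_m)`) has a primitive positive defining
formula over `L` which is correct on all tuples of elements of `S`. -/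
def IsPPInterpretation (L L' : FirstOrder.Language.{0, 0}) (D E : Type) [L.Structure D]
    [L'.Structure E] (d : ℕ) (S : Set (Fin d → D)) (h : S → E) : Prop :=
  Function.Surjective h ∧
  PPDefinable L D S ∧
  (∃ φ : PPFormula L (Fin 2 × Fin d) 0, ∀ a : Fin 2 → S,
      (φ.Realize (fun p => (a p.1).val p.2) (fun i => i.elim0) ↔ h (a 0) = h (a 1))) ∧
  (∀ (m : ℕ) (R : L'.Relations m), ∃ φ : PPFormula L (Fin m × Fin d) 0, ∀ a : Fin m → S,
      (φ.Realize (fun p => (a p.1).val p.2) (fun i => i.elim0) ↔ RelMap R fun i => h (a i))) ∧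
  (∀ (m : ℕ) (F : L'.Functions m), ∃ φ : PPFormula L (Fin (m + 1) × Fin d) 0,
      ∀ a : Fin (m + 1) → S,
      (φ.Realize (fun p => (a p.1).val p.2) (fun i => i.elim0) ↔
        h (a 0) = funMap F fun i => h (a i.succ)))

/-- `E` has a primitive positive interpretation in `D`. -/
def HasPPInterpretation (L L' : FirstOrder.Language.{0, 0}) (D E : Type) [L.Structure D]
    [L'.Structure E] : Prop :=
  ∃ (d : ℕ) (S : Set (Fin d → D)) (h : S → E), 1 ≤ d ∧ IsPPInterpretation L L' D E d S h

/-- The `(1 + d₁·d₂)`-ary relation (on `E`) defined by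
`x = h₁(h₂(y₁,₁,…,y₁,d₂), …, h₂(y_{d₁},₁,…,y_{d₁},_{d₂}))`. -/
def ComposedGraph {D E : Type} {d₁ d₂ : ℕ} (S₁ : Set (Fin d₁ → D)) (h₁ : S₁ → E)
    (S₂ : Set (Fin d₂ → E)) (h₂ : S₂ → D) : Set (Option (Fin d₁ × Fin d₂) → E) :=
  {t | ∃ (hs : ∀ i : Fin d₁, (fun j => t (some (i, j))) ∈ S₂)
        (hm : (fun i => h₂ ⟨fun j => t (some (i, j)), hs i⟩) ∈ S₁),
      t none = h₁ ⟨fun i => h₂ ⟨fun j => t (some (i, j)), hs i⟩, hm⟩}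

/-- `D` and `E` are primitive positive bi-interpretable: there are mutual primitive positive
interpretations `I = (d₁, S₁, h₁)` and `J = (d₂, S₂, h₂)` such that the graph of `h₁ ∘ h₂` is
primitive positive definable in `E` and the graph of `h₂ ∘ h₁` is primitive positive
definable in `D`. -/
def PPBiInterpretable (L L' : FirstOrder.Language.{0, 0}) (D E : Type) [L.Structure D]
    [L'.Structure E] : Prop :=
  ∃ (d₁ : ℕ) (S₁ : Set (Fin d₁ → D)) (h₁ : S₁ → E)
    (d₂ : ℕ) (S₂ : Set (Fin d₂ → E)) (h₂ : S₂ → D),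
    1 ≤ d₁ ∧ 1 ≤ d₂ ∧
    IsPPInterpretation L L' D E d₁ S₁ h₁ ∧
    IsPPInterpretation L' L E D d₂ S₂ h₂ ∧
    PPDefinable L' E (ComposedGraph S₁ h₁ S₂ h₂) ∧
    PPDefinable L D (ComposedGraph S₂ h₂ S₁ h₁)

/-- The topology of pointwise convergence on `n`-ary operations on `D`, where `D` carries the
discrete topology. -/
def opTop (D : Type) (n : ℕ) : TopologicalSpace ((Fin n → D) → D) :=
  @Pi.topologicalSpace (Fin n → D) (fun _ => D) (fun _ => ⊥)

/-- The topology of pointwise convergence on the `n`-ary part of a clone `C`. -/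
def cloneTop {D : Type} (C : ∀ n : ℕ, Set ((Fin n → D) → D)) (n : ℕ) :
    TopologicalSpace (C n) :=
  (opTop D n).induced Subtype.val

/-- A clone homomorphism from `C` to `C'`: an arity-preserving map sending each projection to
the corresponding projection and commuting with composition. -/
structure CloneHomOn {D E : Type} (C : ∀ n : ℕ, Set ((Fin n → D) → D))
    (C' : ∀ n : ℕ, Set ((Fin n → E) → E)) where
  toFun : ∀ n, C n → C' n
  map_proj : ∀ (n : ℕ) (k : Fin n) (f : C n), f.val = (fun x => x k) →
      (toFun n f).val = fun x => x k
  map_comp : ∀ (m n : ℕ) (f : C m) (g : Fin m → C n) (fg : C n),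
      fg.val = (fun x => f.val fun j => (g j).val x) →
      (toFun n fg).val = fun y => (toFun m f).val fun j => (toFun n (g j)).val y

/-- Continuity of a clone homomorphism with respect to the topologies of pointwise
convergence. -/
def CloneHomOn.IsContinuous {D E : Type} {C : ∀ n : ℕ, Set ((Fin n → D) → D)}
    {C' : ∀ n : ℕ, Set ((Fin n → E) → E)} (ξ : CloneHomOn C C') : Prop :=
  ∀ n, @Continuous _ _ (cloneTop C n) (cloneTop C' n) (ξ.toFun n)

/-- The image of a clone homomorphism is dense. -/
def CloneHomOn.DenseImage {D E : Type} {C : ∀ n : ℕ, Set ((Fin n → D) → D)}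
    {C' : ∀ n : ℕ, Set ((Fin n → E) → E)} (ξ : CloneHomOn C C') : Prop :=
  ∀ n, @Dense _ (cloneTop C' n) (Set.range (ξ.toFun n))

/-- Two clones are isomorphic as topological clones: there are mutually inverse continuous
clone homomorphisms between them. -/
def TopCloneIsomorphic {D E : Type} (C : ∀ n : ℕ, Set ((Fin n → D) → D))
    (C' : ∀ n : ℕ, Set ((Fin n → E) → E)) : Prop :=
  ∃ (ξ : CloneHomOn C C') (ζ : CloneHomOn C' C),
    ξ.IsContinuous ∧ ζ.IsContinuous ∧
    (∀ n f, ζ.toFun n (ξ.toFun n f) = f) ∧ (∀ n g, ξ.toFun n (ζ.toFun n g) = g)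

/-- The polymorphism clone of the `L`-structure `D`. -/
def PolClone (L : FirstOrder.Language.{0, 0}) (D : Type) [L.Structure D] :
    ∀ n : ℕ, Set ((Fin n → D) → D) := fun _ => {f | IsPolymorphism L D f}

/-- The clone of term operations `Clo(ops)` of the algebra `ops`, as a set family. -/
def CloSet {A I : Type} {ar : I → ℕ} (ops : ∀ i, (Fin (ar i) → A) → A) :
    ∀ n : ℕ, Set ((Fin n → A) → A) := fun n => {f | InClone ops n f}

/-- The closure `cl(Clo(ops))` of the clone of term operations of the algebra `ops` in the
topology of pointwise convergence. -/
def ClosedCloSet {A I : Type} {ar : I → ℕ} (ops : ∀ i, (Fin (ar i) → A) → A) :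
    ∀ n : ℕ, Set ((Fin n → A) → A) := fun n => @closure _ (opTop A n) (CloSet ops n)

/-- The (relational) language whose `n`-ary relation symbols are exactly the `n`-ary relations
on `D` preserved by all operations of the algebra `ops`. -/
def invLang {D I : Type} {ar : I → ℕ} (ops : ∀ i, (Fin (ar i) → D) → D) :
    FirstOrder.Language.{0, 0} :=
  ⟨fun _ => Empty, fun n => {R : Set (Fin n → D) // ∀ i, Preserves (ops i) R}⟩

/-- The structure on `D` consisting of all relations preserved by all operations of `ops`. -/
def invStructure {D I : Type} {ar : I → ℕ} (ops : ∀ i, (Fin (ar i) → D) → D) :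
    (invLang ops).Structure D where
  funMap := fun F _ => F.elim
  RelMap := fun R v => v ∈ R.val

/-- The algebra `ops` is locally oligomorphic: the structure consisting of all relations
preserved by all of its operations is ω-categorical. -/
def LocallyOligomorphic {D I : Type} {ar : I → ℕ}
    (ops : ∀ i, (Fin (ar i) → D) → D) : Prop :=
  @IsOmegaCategorical (invLang ops) D (invStructure ops)

/-- The algebra `ops` is finitely related: there is a relational structure on the same domain
with finitely many relation symbols whose polymorphism clone is `cl(Clo(ops))`. -/
def FinitelyRelated {D I : Type} {ar : I → ℕ}
    (ops : ∀ i, (Fin (ar i) → D) → D) : Prop :=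
  ∃ (L : FirstOrder.Language.{0, 0}) (st : L.Structure D),
    (∀ n, IsEmpty (L.Functions n)) ∧ Finite (Σ n : ℕ, L.Relations n) ∧
    ∀ (n : ℕ) (f : (Fin n → D) → D),
      f ∈ ClosedCloSet ops n ↔ @IsPolymorphism L D st n f

/-- A primitive positive formula is unnested iff each of its atomic subformulas is of the form
`x₀ = x₁`, `x₀ = F(x₁,…,x_m)`, or `R(x₁,…,x_m)` for variables `x₀,…,x_m`. -/
def PPFormula.IsUnnested {L : FirstOrder.Language.{0, 0}} {α : Type} :
    ∀ {n : ℕ}, PPFormula L α n → Prop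
  | n, PPFormula.equal t₁ t₂ =>
      (∃ i j : α ⊕ Fin n, t₁ = Term.var i ∧ t₂ = Term.var j) ∨
      (∃ (i : α ⊕ Fin n) (m : ℕ) (F : L.Functions m) (x : Fin m → α ⊕ Fin n),
          t₁ = Term.var i ∧ t₂ = Term.func F fun q => Term.var (x q))
  | n, PPFormula.rel (m := m) _ ts => ∃ x : Fin m → α ⊕ Fin n, ts = fun q => Term.var (x q)
  | _, PPFormula.and φ ψ => φ.IsUnnested ∧ ψ.IsUnnested
  | _, PPFormula.ex φ => φ.IsUnnested

/-- A formula is atomic iff it is an equality of terms or a relation symbol applied to terms. -/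
def PPFormula.IsAtomic {L : FirstOrder.Language.{0, 0}} {α : Type} {n : ℕ} :
    PPFormula L α n → Prop
  | PPFormula.equal _ _ => True
  | PPFormula.rel _ _ => True
  | PPFormula.and _ _ => False
  | PPFormula.ex _ => False

/-! Polymorphisms of `Γ` preserve every pp-definable relation, and hence also every relation
that a pp interpretation `(d, S, h)` defines on `S`: the domain `S`, the kernel of `h`, and the
preimages of the relations and function graphs of `Δ`. Preservation of the kernel makes
`h(a₁,…,aₘ) ↦ h(f(a₁,…,aₘ))` well defined, and preservation of the remaining relations makes
it a polymorphism of `Δ`. -/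

section Polymorphism

variable {L : FirstOrder.Language.{0, 0}} {D : Type} [L.Structure D] {l : ℕ}
  {f : (Fin l → D) → D}

theorem IsPolymorphism.map_realize_term (hf : IsPolymorphism L D f) {β : Type}
    (t : L.Term β) (w : Fin l → β → D) :
    f (fun i => t.realize (w i)) = t.realize fun b => f fun i => w i b := by
  induction t with
  | var b => rfl
  | func F ts ih =>
    exact (hf.1 F fun j i => (ts j).realize (w i)).trans (congrArg _ (funext ih))

theorem IsPolymorphism.realize_ppFormula (hf : IsPolymorphism L D f) {α : Type} {n : ℕ}
    (φ : PPFormula L α n) (v : Fin l → α → D) (xs : Fin l → Fin n → D)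
    (hφ : ∀ i, φ.Realize (v i) (xs i)) :
    φ.Realize (fun a => f fun i => v i a) (fun k => f fun i => xs i k) := by
  have hv : ∀ {n} (xs : Fin l → Fin n → D),
      Sum.elim (fun a => f fun i => v i a) (fun k => f fun i => xs i k) =
        fun b => f fun i => Sum.elim (v i) (xs i) b := fun _ => by
    funext b; cases b <;> rfl
  induction φ with
  | equal t₁ t₂ =>
    simp only [PPFormula.Realize, hv, ← hf.map_realize_term] at hφ ⊢
    exact congrArg f (funext hφ)
  | rel R ts =>
    simp only [PPFormula.Realize, hv, ← hf.map_realize_term] at hφ ⊢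
    exact hf.2 R _ hφ
  | and φ ψ ihφ ihψ => exact ⟨ihφ xs fun i => (hφ i).1, ihψ xs fun i => (hφ i).2⟩
  | ex φ ih =>
    choose a ha using hφ
    refine ⟨f a, ?_⟩
    have hsnoc : Fin.snoc (α := fun _ => D) (fun k => f fun i => xs i k) (f a) =
        fun k => f fun i => Fin.snoc (α := fun _ => D) (xs i) (a i) k := by
      funext k
      induction k using Fin.lastCases <;> simp
    rw [hsnoc]
    exact ih _ ha

theorem IsPolymorphism.realize_ppFormula_zero (hf : IsPolymorphism L D f) {α : Type}
    (φ : PPFormula L α 0) (v : Fin l → α → D)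
    (hφ : ∀ i, φ.Realize (v i) Fin.elim0) :
    φ.Realize (fun a => f fun i => v i a) Fin.elim0 := by
  simpa only [Subsingleton.elim _ (Fin.elim0 : Fin 0 → D)] using
    hf.realize_ppFormula φ v (fun _ => Fin.elim0) hφ

theorem IsPolymorphism.preserves_of_ppDefinable (hf : IsPolymorphism L D f) {α : Type}
    {R : Set (α → D)} (hR : PPDefinable L D R) : Preserves f R := by
  obtain ⟨φ, hφ⟩ := hR
  intro t ht
  exact (hφ _).2 (hf.realize_ppFormula_zero φ t fun i => (hφ _).1 (ht i))

theorem IsPolymorphism.preserves_ppDefined_on {d m : ℕ} (hf : IsPolymorphism L D f)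
    {S : Set (Fin d → D)} (hS : Preserves f S) {P : (Fin m → S) → Prop}
    (φ : PPFormula L (Fin m × Fin d) 0)
    (hφ : ∀ a : Fin m → S, φ.Realize (fun p => (a p.1).val p.2) Fin.elim0 ↔ P a)
    (b : Fin l → Fin m → S) (hb : ∀ k, P (b k)) :
    P fun j => ⟨fun p => f fun k => (b k j).val p, hS _ fun k => (b k j).2⟩ :=
  (hφ _).1 (hf.realize_ppFormula_zero φ _ fun k => (hφ (b k)).2 (hb k))

end Polymorphism

theorem IsPolymorphismAlgebra.isPolymorphism {L : FirstOrder.Language.{0, 0}} {D : Type}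
    [L.Structure D] {I : Type} {ar : I → ℕ} {ops : ∀ i, (Fin (ar i) → D) → D}
    (hC : IsPolymorphismAlgebra L D ar ops) (i : I) : IsPolymorphism L D (ops i) :=
  (hC.subset ⟨i, rfl⟩ : (⟨ar i, ops i⟩ : Σ n, (Fin n → D) → D) ∈ _)

namespace IsPPInterpretation

variable {L L' : FirstOrder.Language.{0, 0}} {D E : Type} [L.Structure D] [L'.Structure E]
  {d : ℕ} {S : Set (Fin d → D)} {h : S → E} {l : ℕ} {f : (Fin l → D) → D}

theorem preserves_domain (hint : IsPPInterpretation L L' D E d S h)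
    (hf : IsPolymorphism L D f) : Preserves f S :=
  hf.preserves_of_ppDefinable hint.2.1

theorem map_kernel (hint : IsPPInterpretation L L' D E d S h) (hf : IsPolymorphism L D f)
    (a b : Fin l → S) (hab : ∀ k, h (a k) = h (b k))
    (ha : (fun j => f fun k => (a k).val j) ∈ S) (hb : (fun j => f fun k => (b k).val j) ∈ S) :
    h ⟨_, ha⟩ = h ⟨_, hb⟩ := by
  obtain ⟨φ, hφ⟩ := hint.2.2.1
  exact hf.preserves_ppDefined_on (hint.preserves_domain hf) φ hφ (fun k => ![a k, b k]) hab

/-- By `map_kernel`, the choice of preimages under `h` made here is immaterial (`map_apply`). -/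
noncomputable def inducedOp (hint : IsPPInterpretation L L' D E d S h)
    (hf : IsPolymorphism L D f) (c : Fin l → E) : E :=
  h ⟨fun j => f fun k => (Function.surjInv hint.1 (c k)).val j,
    hint.preserves_domain hf _ fun k => (Function.surjInv hint.1 (c k)).2⟩

theorem map_apply (hint : IsPPInterpretation L L' D E d S h) (hf : IsPolymorphism L D f)
    (a : Fin l → S) (ha : (fun j => f fun k => (a k).val j) ∈ S) :
    h ⟨_, ha⟩ = hint.inducedOp hf fun k => h (a k) :=
  hint.map_kernel hf _ _ (fun _ => (Function.surjInv_eq hint.1 _).symm) ha _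

theorem isPolymorphism_inducedOp (hint : IsPPInterpretation L L' D E d S h)
    (hf : IsPolymorphism L D f) : IsPolymorphism L' E (hint.inducedOp hf) := by
  have pre_spec := Function.surjInv_eq hint.1
  constructor
  · intro n F a
    obtain ⟨φ, hφ⟩ := hint.2.2.2.2 n F
    exact hf.preserves_ppDefined_on (hint.preserves_domain hf) φ hφ
      (fun k => Fin.cases (Function.surjInv hint.1 (funMap F fun j => a j k))
        fun j => Function.surjInv hint.1 (a j k))
      fun _ => by simp [pre_spec]
  · intro n R a ha
    obtain ⟨φ, hφ⟩ := hint.2.2.2.1 n R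
    exact hf.preserves_ppDefined_on (hint.preserves_domain hf) φ hφ
      (fun k j => Function.surjInv hint.1 (a j k)) fun k => by simpa [pre_spec] using ha k

end IsPPInterpretation

theorem statement11_general (L L' : FirstOrder.Language.{0, 0}) (D E : Type)
    [L.Structure D] [L'.Structure E]
    (d : ℕ) (S : Set (Fin d → D)) (h : S → E)
    (hint : IsPPInterpretation L L' D E d S h)
    {I : Type} (ar : I → ℕ) (opsC : ∀ i, (Fin (ar i) → D) → D)
    (hC : IsPolymorphismAlgebra L D ar opsC) :
    ClosedUnderPow opsC S ∧
    (∀ (i : I) (a b : Fin (ar i) → S), (∀ k, h (a k) = h (b k)) →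
      ∀ (hma : (fun j => opsC i fun k => (a k).val j) ∈ S)
        (hmb : (fun j => opsC i fun k => (b k).val j) ∈ S),
        h ⟨_, hma⟩ = h ⟨_, hmb⟩) ∧
    ∃ opsB : ∀ i, (Fin (ar i) → E) → E,
      (∀ (i : I) (a : Fin (ar i) → S)
          (hm : (fun j => opsC i fun k => (a k).val j) ∈ S),
        h ⟨_, hm⟩ = opsB i fun k => h (a k)) ∧
      (∀ i, IsPolymorphism L' E (opsB i)) ∧
      InHSPfin opsC opsB := by
  have hpoly := hC.isPolymorphism
  have hclosed : ClosedUnderPow opsC S := fun i => hint.preserves_domain (hpoly i)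
  have hhom := fun i => hint.map_apply (hpoly i)
  exact ⟨hclosed, fun i => hint.map_kernel (hpoly i), fun i => hint.inducedOp (hpoly i),
    hhom, fun i => hint.isPolymorphism_inducedOp (hpoly i), d, S, h, hclosed, hint.1, hhom⟩

/-- **Lemma (from pp interpretations to pseudovarieties).** Let `Δ` (the `L'`-structure `E`)
have a primitive positive interpretation `(d, S, h)` in the finite or ω-categorical
structure `Γ` (the `L`-structure `D`), and let `C` be any polymorphism algebra of `Γ`.
Then `S` induces a subalgebra of `C^d`; the kernel of `h` is a congruence of this
subalgebra; and there is an algebra `B` on the domain of `Δ` such that `h` is a surjective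
homomorphism onto `B`, every basic operation of `B` is a polymorphism of `Δ`, and
`B ∈ HSP^fin(C)`. -/
theorem statement11 (L L' : FirstOrder.Language.{0, 0}) (D E : Type)
    [L.Structure D] [L'.Structure E]
    (hD : Finite D ∨ IsOmegaCategorical L D)
    (d : ℕ) (hd : 1 ≤ d) (S : Set (Fin d → D)) (h : S → E)
    (hint : IsPPInterpretation L L' D E d S h)
    {I : Type} (ar : I → ℕ) (opsC : ∀ i, (Fin (ar i) → D) → D)
    (hC : IsPolymorphismAlgebra L D ar opsC) :
    ClosedUnderPow opsC S ∧
    (∀ (i : I) (a b : Fin (ar i) → S), (∀ k, h (a k) = h (b k)) →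
      ∀ (hma : (fun j => opsC i fun k => (a k).val j) ∈ S)
        (hmb : (fun j => opsC i fun k => (b k).val j) ∈ S),
        h ⟨_, hma⟩ = h ⟨_, hmb⟩) ∧
    ∃ opsB : ∀ i, (Fin (ar i) → E) → E,
      (∀ (i : I) (a : Fin (ar i) → S)
          (hm : (fun j => opsC i fun k => (a k).val j) ∈ S),
        h ⟨_, hm⟩ = opsB i fun k => h (a k)) ∧
      (∀ i, IsPolymorphism L' E (opsB i)) ∧
      InHSPfin opsC opsB :=
  statement11_general L L' D E d S h hint ar opsC hC
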